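/- For any weak composition α, the fundamental Demazure atom satisfies the recursion: if α_i = 0 and α_{i+1} ≠ 0, then Ã_α = θ̃_i(Ã_{s_i(α)}). -/

import Mathlib

open MvPolynomial

/-- Hivert's quasisymmetric swap on exponent vectors: exchange the exponents in
positions `i` and `i+1` if one of them is zero, otherwise do nothing. -/
noncomputable def tswapE (n i : ℕ) (hi : i + 1 < n) (β : Fin n →₀ ℕ) : Fin n →₀ ℕ :=
  if β ⟨i, by omega⟩ = 0 ∨ β ⟨i + 1, hi⟩ = 0 then
    β.equivMapDomain (Equiv.swap (⟨i, by omega⟩ : Fin n) ⟨i + 1, hi⟩)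
  else β

/-- Hivert's quasisymmetric action `s̃ᵢ` on polynomials, acting monomial-wise by
`s̃ᵢ(x^β) = x^(s̃ᵢ β)` and extended linearly. -/
noncomputable def stilde (n i : ℕ) (hi : i + 1 < n) (f : MvPolynomial (Fin n) ℂ) :
    MvPolynomial (Fin n) ℂ :=
  f.support.sum fun β => monomial (tswapE n i hi β) (coeff β f)
open scoped Classical

/-- Hivert's operator `π̃ᵢ f = (xᵢ f − s̃ᵢ(xᵢ f))/(xᵢ − xᵢ₊₁)`, defined as the
unique `g` with `(xᵢ − xᵢ₊₁) * g = xᵢ f − s̃ᵢ(xᵢ f)` (such a `g` always exists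
and is unique since `xᵢ − xᵢ₊₁` is a nonzerodivisor).  For `i` out of range,
`π̃ᵢ` is the identity. -/
noncomputable def ptilde (n i : ℕ) (f : MvPolynomial (Fin n) ℂ) : MvPolynomial (Fin n) ℂ :=
  if h : i + 1 < n then
    (if hg : ∃ g : MvPolynomial (Fin n) ℂ,
        ((X ⟨i, by omega⟩ : MvPolynomial (Fin n) ℂ) - X ⟨i + 1, h⟩) * g
        = (X ⟨i, by omega⟩ : MvPolynomial (Fin n) ℂ) * f
            - stilde n i h ((X ⟨i, by omega⟩ : MvPolynomial (Fin n) ℂ) * f) then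
      hg.choose
    else 0)
  else f

/-- `θ̃ᵢ := π̃ᵢ − id`. -/
noncomputable def thetatilde (n i : ℕ) (f : MvPolynomial (Fin n) ℂ) : MvPolynomial (Fin n) ℂ :=
  ptilde n i f - f

/-- The ordinary transposition `sᵢ` acting on weak compositions of length `n`
(identity when `i` is out of range). -/
def swapAt (n i : ℕ) (α : Fin n → ℕ) : Fin n → ℕ :=
  if h : i + 1 < n then α ∘ Equiv.swap (⟨i, by omega⟩ : Fin n) ⟨i + 1, h⟩ else α

/-- `flatC n α` is `flat(α)`: the composition obtained from `α` by moving all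
zero entries to the right end (keeping the nonzero entries in order). -/
def flatC (n : ℕ) (α : Fin n → ℕ) : Fin n → ℕ := fun p =>
  ((List.ofFn α).filter (· ≠ 0)).getD p 0

/-- `IsMinWord n l α` says that `l = [i₁,…,i_k]` is a word of minimal length
with `s_{i₁} ⋯ s_{i_k} (α) = flat(α)`; i.e. it is a reduced word for the
minimal-length permutation `w_α` with `w_α(α) = flat(α)`. -/
def IsMinWord (n : ℕ) (l : List ℕ) (α : Fin n → ℕ) : Prop :=
  (∀ j ∈ l, j + 1 < n) ∧ l.foldr (swapAt n) α = flatC n α ∧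
    ∀ l' : List ℕ, (∀ j ∈ l', j + 1 < n) → l'.foldr (swapAt n) α = flatC n α →
      l.length ≤ l'.length

/-- Exponent vector of a monomial, as a finitely supported function. -/
noncomputable def toExp (n : ℕ) (α : Fin n → ℕ) : Fin n →₀ ℕ :=
  Finsupp.equivFunOnFinite.symm α

/-- For a word `l = [i₁,…,i_k]` representing `w = s_{i₁} ⋯ s_{i_k}`, the operator
`θ̃_{w⁻¹} = θ̃_{i_k} ⋯ θ̃_{i₁}` applied to `f`. -/
noncomputable def thetaWordInv (n : ℕ) (l : List ℕ) (f : MvPolynomial (Fin n) ℂ) :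
    MvPolynomial (Fin n) ℂ :=
  l.foldl (fun acc j => thetatilde n j acc) f

/-- For a word `l = [i₁,…,i_k]` representing `w = s_{i₁} ⋯ s_{i_k}`, the operator
`π̃_{w⁻¹} = π̃_{i_k} ⋯ π̃_{i₁}` applied to `f`. -/
noncomputable def piWordInv (n : ℕ) (l : List ℕ) (f : MvPolynomial (Fin n) ℂ) :
    MvPolynomial (Fin n) ℂ :=
  l.foldl (fun acc j => ptilde n j acc) f

/-!
On monomials, `θ̃ᵢ` sends `x^δ` to `-x^δ` if `δᵢ₊₁ ≠ 0`, and otherwise replaces `xᵢ^δᵢ` by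
`h_{δᵢ}(xᵢ, xᵢ₊₁) - xᵢ^δᵢ`; hence `θ̃ᵢ` and `θ̃ⱼ` commute when `|i - j| ≥ 2`.

A word sorting `α` into `flat(α)` is reduced iff its length is the number of pairs `p < q` with
`αₚ = 0 ≠ α_q`, and then its rightmost letter, the first transposition applied to `α`, is a zero
ascent of `α` (`αᵢ = 0 ≠ αᵢ₊₁`). Two distinct zero ascents are at distance at least two, so by
induction on the length any two reduced words of `w_α` give the same operator `θ̃_{w_α⁻¹}`.
Appending `i` on the right of a reduced word of `sᵢ(α)` gives a reduced word of `α`, which is the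
recursion.
-/

theorem Finset.sum_antidiagonal_sub_telescope {M : Type*} [AddCommGroup M] (g : ℕ × ℕ → M)
    (m : ℕ) :
    ∑ p ∈ antidiagonal m, (g (p.1 + 1, p.2) - g (p.1, p.2 + 1)) = g (m + 1, 0) - g (0, m + 1) := by
  have h₁ := Nat.sum_antidiagonal_succ (f := g) (n := m)
  have h₂ := Nat.sum_antidiagonal_succ' (f := g) (n := m)
  rw [sum_sub_distrib, eq_sub_of_add_eq' h₁.symm, eq_sub_of_add_eq' h₂.symm]
  abel

theorem Fin.lt_iff_eq_and_eq_or_swap_lt_swap {n : ℕ} {a b p q : Fin n} (hab : (a : ℕ) + 1 = b)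
    (hpb : p ≠ b) : p < q ↔ p = a ∧ q = b ∨ Equiv.swap a b p < Equiv.swap a b q := by
  rw [Ne, Fin.ext_iff] at hpb
  rw [Fin.ext_iff, Fin.ext_iff, Fin.lt_def, Fin.lt_def, Equiv.swap_apply_def, Equiv.swap_apply_def]
  split_ifs <;> simp only [Fin.ext_iff] at * <;> omega

theorem List.getD_eq_zero_of_forall_eq_zero {L : List ℕ} (hL : ∀ x ∈ L, x = 0) (p : ℕ) :
    L.getD p 0 = 0 := by
  rw [List.getD_eq_getElem?_getD]
  cases h : L[p]? with
  | none => rfl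
  | some x => exact hL x (List.mem_of_getElem? h)

theorem List.getD_filter_ne_zero_of_pairwise {L : List ℕ}
    (hL : L.Pairwise fun a b => a = 0 → b = 0) (p : ℕ) :
    (L.filter (· ≠ 0)).getD p 0 = L.getD p 0 := by
  induction L generalizing p with
  | nil => rfl
  | cons a L ih =>
    rw [List.pairwise_cons] at hL
    by_cases ha : a = 0
    · have hall : ∀ x ∈ a :: L, x = 0 := by simpa [ha] using hL.1
      rw [List.filter_eq_nil_iff.mpr (by simpa using hall),
        List.getD_eq_zero_of_forall_eq_zero hall]
      rfl
    · rw [List.filter_cons_of_pos (by simpa using ha)]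
      cases p with
      | zero => rfl
      | succ p => exact ih hL.2 p

theorem List.getD_eq_zero_iff_length_le {L : List ℕ} (hL : ∀ x ∈ L, x ≠ 0) (p : ℕ) :
    L.getD p 0 = 0 ↔ L.length ≤ p := by
  by_cases hp : p < L.length
  · rw [List.getD_eq_getElem _ _ hp]
    exact iff_of_false (hL _ (List.getElem_mem hp)) (by omega)
  · rw [List.getD_eq_default _ _ (by omega)]
    exact iff_of_true rfl (by omega)

theorem List.filter_ne_zero_set_set {L : List ℕ} {j : ℕ} (h : L.getD j 0 = 0) :
    ((L.set j (L.getD (j + 1) 0)).set (j + 1) 0).filter (· ≠ 0) = L.filter (· ≠ 0) := by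
  induction L generalizing j with
  | nil => rfl
  | cons a L ih =>
    cases j with
    | zero =>
      cases L <;> simp_all [List.filter_cons]
    | succ j => simp_all [List.filter_cons]

namespace FundamentalAtom

open Finset

variable {n : ℕ}

noncomputable def updatePair (i : ℕ) (hi : i + 1 < n) (δ : Fin n →₀ ℕ) (a b : ℕ) : Fin n →₀ ℕ :=
  (δ.update ⟨i, by omega⟩ a).update ⟨i + 1, hi⟩ b

lemma updatePair_apply (i : ℕ) (hi : i + 1 < n) (δ : Fin n →₀ ℕ) (a b : ℕ) (p : Fin n) :
    updatePair i hi δ a b p = if (p : ℕ) = i + 1 then b else if (p : ℕ) = i then a else δ p := by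
  simp only [updatePair, Finsupp.update_apply, Fin.ext_iff]

lemma updatePair_left (i : ℕ) (hi : i + 1 < n) (δ : Fin n →₀ ℕ) (a b : ℕ) :
    updatePair i hi δ a b ⟨i, by omega⟩ = a := by
  simp [updatePair_apply]

lemma updatePair_right (i : ℕ) (hi : i + 1 < n) (δ : Fin n →₀ ℕ) (a b : ℕ) :
    updatePair i hi δ a b ⟨i + 1, hi⟩ = b := by
  simp [updatePair_apply]

lemma updatePair_apply_of_far (i j : ℕ) (hi : i + 1 < n) (hj : j + 1 < n)
    (hij : i + 1 < j ∨ j + 1 < i) (δ : Fin n →₀ ℕ) (a b : ℕ) :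
    updatePair j hj δ a b ⟨i, by omega⟩ = δ ⟨i, by omega⟩ ∧
      updatePair j hj δ a b ⟨i + 1, hi⟩ = δ ⟨i + 1, hi⟩ := by
  simp only [updatePair_apply]
  constructor <;> split_ifs <;> first | rfl | omega

lemma updatePair_comm (i j : ℕ) (hi : i + 1 < n) (hj : j + 1 < n)
    (hij : i + 1 < j ∨ j + 1 < i) (δ : Fin n →₀ ℕ) (a b c d : ℕ) :
    updatePair i hi (updatePair j hj δ c d) a b = updatePair j hj (updatePair i hi δ a b) c d := by
  ext p
  simp only [updatePair_apply]
  split_ifs <;> first | rfl | omega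

lemma updatePair_self (i : ℕ) (hi : i + 1 < n) (δ : Fin n →₀ ℕ) :
    updatePair i hi δ (δ ⟨i, by omega⟩) (δ ⟨i + 1, hi⟩) = δ := by
  rw [updatePair, Finsupp.update_self, Finsupp.update_self]

lemma updatePair_updatePair (i : ℕ) (hi : i + 1 < n) (δ : Fin n →₀ ℕ) (a b c d : ℕ) :
    updatePair i hi (updatePair i hi δ a b) c d = updatePair i hi δ c d := by
  ext p
  simp only [updatePair_apply]
  split_ifs <;> rfl

noncomputable def piSupport (i : ℕ) (hi : i + 1 < n) (δ : Fin n →₀ ℕ) : Finset (ℕ × ℕ) :=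
  if δ ⟨i + 1, hi⟩ = 0 then antidiagonal (δ ⟨i, by omega⟩) else ∅

/-- The value of `π̃ᵢ(x^δ)` (`ptilde_eq_piLin`): `0` if `δᵢ₊₁ ≠ 0`, and otherwise `x^δ` with
`xᵢ^δᵢ` replaced by the complete homogeneous polynomial `h_{δᵢ}(xᵢ, xᵢ₊₁)`. -/
noncomputable def piMonomial (i : ℕ) (hi : i + 1 < n) (δ : Fin n →₀ ℕ) : MvPolynomial (Fin n) ℂ :=
  ∑ ab ∈ piSupport i hi δ, monomial (updatePair i hi δ ab.1 ab.2) 1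

noncomputable def piLin (i : ℕ) (hi : i + 1 < n) :
    MvPolynomial (Fin n) ℂ →ₗ[ℂ] MvPolynomial (Fin n) ℂ :=
  (basisMonomials (Fin n) ℂ).constr ℂ (piMonomial i hi)

noncomputable def stildeLin (i : ℕ) (hi : i + 1 < n) :
    MvPolynomial (Fin n) ℂ →ₗ[ℂ] MvPolynomial (Fin n) ℂ :=
  (basisMonomials (Fin n) ℂ).constr ℂ fun β => monomial (tswapE n i hi β) 1

lemma stilde_eq_stildeLin (i : ℕ) (hi : i + 1 < n) (f : MvPolynomial (Fin n) ℂ) :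
    stilde n i hi f = stildeLin i hi f := by
  rw [stilde, stildeLin, Module.Basis.constr_apply]
  refine Finset.sum_congr rfl fun β _ => ?_
  show _ = coeff β f • _
  rw [smul_monomial, smul_eq_mul, mul_one]

lemma stildeLin_monomial (i : ℕ) (hi : i + 1 < n) (δ : Fin n →₀ ℕ) :
    stildeLin i hi (monomial δ 1) = monomial (tswapE n i hi δ) 1 := by
  exact (basisMonomials (Fin n) ℂ).constr_basis ℂ _ δ

lemma tswapE_of_ne_zero (i : ℕ) (hi : i + 1 < n) (δ : Fin n →₀ ℕ)
    (h0 : δ ⟨i, by omega⟩ ≠ 0) (h1 : δ ⟨i + 1, hi⟩ ≠ 0) : tswapE n i hi δ = δ := by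
  rw [tswapE, if_neg (not_or.mpr ⟨h0, h1⟩)]

lemma tswapE_of_eq_zero (i : ℕ) (hi : i + 1 < n) (δ : Fin n →₀ ℕ)
    (h : δ ⟨i, by omega⟩ = 0 ∨ δ ⟨i + 1, hi⟩ = 0) :
    tswapE n i hi δ = updatePair i hi δ (δ ⟨i + 1, hi⟩) (δ ⟨i, by omega⟩) := by
  rw [tswapE, if_pos h]
  ext p
  rw [Finsupp.equivMapDomain_apply, Equiv.symm_swap, Equiv.swap_apply_def, updatePair_apply]
  simp only [Fin.ext_iff]
  split_ifs <;> first | rfl | omega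

lemma X_mul_monomial_updatePair (i : ℕ) (hi : i + 1 < n) (δ : Fin n →₀ ℕ) (a b : ℕ) :
    X ⟨i, by omega⟩ * monomial (updatePair i hi δ a b) (1 : ℂ)
        = monomial (updatePair i hi δ (a + 1) b) 1 ∧
      X ⟨i + 1, hi⟩ * monomial (updatePair i hi δ a b) (1 : ℂ)
        = monomial (updatePair i hi δ a (b + 1)) 1 := by
  simp only [X, monomial_mul, one_mul]
  constructor <;> refine congrArg (monomial · (1 : ℂ)) ?_ <;> ext p <;>
    simp only [Finsupp.add_apply, Finsupp.single_apply, updatePair_apply, Fin.ext_iff] <;>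
    split_ifs <;> omega

lemma sub_mul_piMonomial (i : ℕ) (hi : i + 1 < n) (δ : Fin n →₀ ℕ) :
    (X ⟨i, by omega⟩ - X ⟨i + 1, hi⟩) * piMonomial i hi δ
      = X ⟨i, by omega⟩ * monomial δ 1 - stildeLin i hi (X ⟨i, by omega⟩ * monomial δ 1) := by
  have hX : X ⟨i, by omega⟩ * monomial δ (1 : ℂ)
      = monomial (updatePair i hi δ (δ ⟨i, by omega⟩ + 1) (δ ⟨i + 1, hi⟩)) 1 := by
    conv_lhs => rw [← updatePair_self i hi δ]
    exact (X_mul_monomial_updatePair i hi δ _ _).1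
  rw [hX, stildeLin_monomial, piMonomial, piSupport]
  by_cases h1 : δ ⟨i + 1, hi⟩ = 0
  · rw [tswapE_of_eq_zero _ _ _ (Or.inr (by rw [updatePair_right, h1])), updatePair_left,
      updatePair_right, updatePair_updatePair, if_pos h1, h1, mul_sum]
    rw [sum_congr rfl fun ab _ => by
      rw [sub_mul, (X_mul_monomial_updatePair i hi δ _ _).1,
        (X_mul_monomial_updatePair i hi δ _ _).2]]
    exact sum_antidiagonal_sub_telescope (fun ab => monomial (updatePair i hi δ ab.1 ab.2) 1) _
  · rw [tswapE_of_ne_zero _ _ _ (by rw [updatePair_left]; omega) (by rwa [updatePair_right]),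
      sub_self, if_neg h1, sum_empty, mul_zero]

lemma piLin_monomial (i : ℕ) (hi : i + 1 < n) (δ : Fin n →₀ ℕ) :
    piLin i hi (monomial δ 1) = piMonomial i hi δ :=
  (basisMonomials (Fin n) ℂ).constr_basis ℂ _ δ

lemma sub_mul_piLin (i : ℕ) (hi : i + 1 < n) (f : MvPolynomial (Fin n) ℂ) :
    (X ⟨i, by omega⟩ - X ⟨i + 1, hi⟩) * piLin i hi f
      = X ⟨i, by omega⟩ * f - stilde n i hi (X ⟨i, by omega⟩ * f) := by
  rw [stilde_eq_stildeLin]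
  have hext : LinearMap.mulLeft ℂ (X ⟨i, by omega⟩ - X ⟨i + 1, hi⟩) ∘ₗ piLin i hi
      = LinearMap.mulLeft ℂ (X ⟨i, by omega⟩)
        - stildeLin i hi ∘ₗ LinearMap.mulLeft ℂ (X ⟨i, by omega⟩) :=
    (basisMonomials (Fin n) ℂ).ext fun δ => by
      simpa [piLin_monomial] using sub_mul_piMonomial i hi δ
  exact LinearMap.congr_fun hext f

lemma ptilde_eq_piLin (i : ℕ) (hi : i + 1 < n) (f : MvPolynomial (Fin n) ℂ) :
    ptilde n i f = piLin i hi f := by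
  have hX : (X ⟨i, by omega⟩ : MvPolynomial (Fin n) ℂ) - X ⟨i + 1, hi⟩ ≠ 0 :=
    sub_ne_zero.mpr (X_injective.ne (by simp [Fin.ext_iff]))
  have hex : ∃ g, (X ⟨i, by omega⟩ - X ⟨i + 1, hi⟩) * g
      = X ⟨i, by omega⟩ * f - stilde n i hi (X ⟨i, by omega⟩ * f) := ⟨_, sub_mul_piLin i hi f⟩
  rw [ptilde, dif_pos hi, dif_pos hex]
  exact mul_left_cancel₀ hX (hex.choose_spec.trans (sub_mul_piLin i hi f).symm)

lemma piSupport_updatePair_of_far (i j : ℕ) (hi : i + 1 < n) (hj : j + 1 < n)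
    (hij : i + 1 < j ∨ j + 1 < i) (δ : Fin n →₀ ℕ) (c d : ℕ) :
    piSupport i hi (updatePair j hj δ c d) = piSupport i hi δ := by
  obtain ⟨h₀, h₁⟩ := updatePair_apply_of_far i j hi hj hij δ c d
  rw [piSupport, piSupport, h₀, h₁]

lemma piLin_piMonomial_comm (i j : ℕ) (hi : i + 1 < n) (hj : j + 1 < n)
    (hij : i + 1 < j ∨ j + 1 < i) (δ : Fin n →₀ ℕ) :
    piLin i hi (piMonomial j hj δ) = piLin j hj (piMonomial i hi δ) := by
  simp only [piMonomial, map_sum, piLin_monomial, piSupport_updatePair_of_far i j hi hj hij,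
    piSupport_updatePair_of_far j i hj hi hij.symm]
  rw [sum_comm]
  exact sum_congr rfl fun _ _ => sum_congr rfl fun _ _ => by rw [updatePair_comm i j hi hj hij]

lemma thetatilde_comm (i j : ℕ) (hi : i + 1 < n) (hj : j + 1 < n)
    (hij : i + 1 < j ∨ j + 1 < i) (f : MvPolynomial (Fin n) ℂ) :
    thetatilde n i (thetatilde n j f) = thetatilde n j (thetatilde n i f) := by
  have hcomm : piLin i hi ∘ₗ piLin j hj = piLin j hj ∘ₗ piLin i hi :=
    (basisMonomials (Fin n) ℂ).ext fun δ => by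
      simpa [piLin_monomial] using piLin_piMonomial_comm i j hi hj hij δ
  simp only [thetatilde, ptilde_eq_piLin i hi, ptilde_eq_piLin j hj, map_sub]
  rw [← LinearMap.comp_apply, hcomm, LinearMap.comp_apply]
  abel

def IsZeroAscent (α : Fin n → ℕ) (j : ℕ) : Prop :=
  ∃ h : j + 1 < n, α ⟨j, by omega⟩ = 0 ∧ α ⟨j + 1, h⟩ ≠ 0

/-- `#(zeroInversions α)` is the length of `w_α` (`isMinWord_iff`). -/
def zeroInversions (α : Fin n → ℕ) : Finset (Fin n × Fin n) :=
  univ.filter fun pq => pq.1 < pq.2 ∧ α pq.1 = 0 ∧ α pq.2 ≠ 0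

lemma swapAt_eq_comp_swap (j : ℕ) (hj : j + 1 < n) (α : Fin n → ℕ) :
    swapAt n j α = α ∘ Equiv.swap ⟨j, by omega⟩ ⟨j + 1, hj⟩ :=
  dif_pos hj

lemma card_zeroInversions_comp_swap {α : Fin n → ℕ} {a b : Fin n} (hab : (a : ℕ) + 1 = b)
    (ha : α a = 0) (hb : α b ≠ 0) :
    #(zeroInversions α) = #(zeroInversions (α ∘ Equiv.swap a b)) + 1 := by
  have hsplit : zeroInversions α = insert (a, b) ((zeroInversions (α ∘ Equiv.swap a b)).map
      ((Equiv.swap a b).prodCongr (Equiv.swap a b)).toEmbedding) := by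
    ext ⟨p, q⟩
    simp only [zeroInversions, mem_insert, mem_map_equiv, mem_filter, mem_univ,
      true_and, Equiv.prodCongr_symm, Equiv.symm_swap, Equiv.prodCongr_apply, Prod.map,
      Function.comp, Equiv.swap_apply_self, Prod.mk.injEq]
    by_cases hp : α p = 0
    · have hpb : p ≠ b := fun h => hb (h ▸ hp)
      rw [Fin.lt_iff_eq_and_eq_or_swap_lt_swap hab hpb]
      grind
    · grind
  have hnotMem : (a, b) ∉ (zeroInversions (α ∘ Equiv.swap a b)).map
      ((Equiv.swap a b).prodCongr (Equiv.swap a b)).toEmbedding := by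
    simp only [zeroInversions, mem_map_equiv, Equiv.prodCongr_symm, Equiv.symm_swap,
      Equiv.prodCongr_apply, Prod.map_apply, Equiv.swap_apply_left, Equiv.swap_apply_right,
      mem_filter, mem_univ, true_and, not_and]
    exact fun hba => absurd hba (by omega)
  rw [hsplit, card_insert_of_notMem hnotMem, card_map]

lemma card_zeroInversions_of_isZeroAscent {α : Fin n → ℕ} {j : ℕ} (hα : IsZeroAscent α j) :
    #(zeroInversions α) = #(zeroInversions (swapAt n j α)) + 1 := by
  obtain ⟨hj, h₀, h₁⟩ := hα
  rw [swapAt_eq_comp_swap j hj]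
  exact card_zeroInversions_comp_swap rfl h₀ h₁

lemma zeroInversions_congr {α β : Fin n → ℕ} (h : ∀ p, α p = 0 ↔ β p = 0) :
    zeroInversions α = zeroInversions β := by
  simp only [zeroInversions, ne_eq, h]

lemma card_zeroInversions_le_of_not_isZeroAscent {α : Fin n → ℕ} {j : ℕ}
    (hα : ¬IsZeroAscent α j) : #(zeroInversions α) ≤ #(zeroInversions (swapAt n j α)) := by
  by_cases hj : j + 1 < n
  · rw [swapAt_eq_comp_swap j hj]
    set a : Fin n := ⟨j, by omega⟩
    set b : Fin n := ⟨j + 1, hj⟩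
    by_cases hdesc : α a ≠ 0 ∧ α b = 0
    · have h := card_zeroInversions_comp_swap (α := α ∘ Equiv.swap a b) (a := a) (b := b) rfl
        (by simpa using hdesc.2) (by simpa using hdesc.1)
      have hinv : (α ∘ Equiv.swap a b) ∘ Equiv.swap a b = α := by
        funext p; simp
      rw [hinv] at h
      omega
    · have hab : α a = 0 ↔ α b = 0 := by
        simp only [IsZeroAscent, not_exists, not_and, not_not] at hα
        grind
      refine (congrArg card (zeroInversions_congr fun p => ?_)).le
      rw [Function.comp_apply, Equiv.swap_apply_def]
      split_ifs with hpa hpb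
      · rw [hpa, hab]
      · rw [hpb, hab]
      · rfl
  · rw [swapAt, dif_neg hj]

lemma card_zeroInversions_le_swapAt_add_one (α : Fin n → ℕ) (j : ℕ) :
    #(zeroInversions α) ≤ #(zeroInversions (swapAt n j α)) + 1 := by
  by_cases hα : IsZeroAscent α j
  · exact (card_zeroInversions_of_isZeroAscent hα).le
  · exact (card_zeroInversions_le_of_not_isZeroAscent hα).trans (Nat.le_succ _)

lemma isZeroAscent_of_card_zeroInversions_lt {α : Fin n → ℕ} {j : ℕ}
    (h : #(zeroInversions (swapAt n j α)) < #(zeroInversions α)) : IsZeroAscent α j :=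
  by_contra fun hα => (card_zeroInversions_le_of_not_isZeroAscent hα).not_gt h

lemma card_zeroInversions_le_foldr_swapAt (w : List ℕ) (α : Fin n → ℕ) :
    #(zeroInversions α) ≤ #(zeroInversions (w.foldr (swapAt n) α)) + w.length := by
  induction w with
  | nil => simp
  | cons j w ih =>
    have := card_zeroInversions_le_swapAt_add_one (w.foldr (swapAt n) α) j
    rw [List.foldr_cons, List.length_cons]
    omega

lemma exists_isZeroAscent {α : Fin n → ℕ} (h : (zeroInversions α).Nonempty) :
    ∃ j, IsZeroAscent α j := by
  obtain ⟨⟨p, q⟩, hpq⟩ := h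
  simp only [zeroInversions, mem_filter, mem_univ, true_and] at hpq
  obtain ⟨hlt, hp, hq⟩ := hpq
  by_contra hno
  have hzero : ∀ d (hd : p + d < n), α ⟨p + d, hd⟩ = 0 := by
    intro d
    induction d with
    | zero => exact fun _ => hp
    | succ d ih => exact fun hd => by_contra fun hne => hno ⟨p + d, by omega, ih (by omega), hne⟩
  have hq' : (⟨p + (q - p), by omega⟩ : Fin n) = q := Fin.ext (by simp only; omega)
  exact hq (hq' ▸ hzero (q - p) (by omega))

lemma zeroInversions_eq_empty_iff {α : Fin n → ℕ} :
    zeroInversions α = ∅ ↔ ∀ ⦃p q⦄, p < q → α p = 0 → α q = 0 := by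
  simp [zeroInversions, filter_eq_empty_iff]

lemma flatC_eq_self {α : Fin n → ℕ} (h : zeroInversions α = ∅) : flatC n α = α := by
  funext p
  have hL : (List.ofFn α).Pairwise fun a b => a = 0 → b = 0 :=
    List.pairwise_ofFn.mpr (zeroInversions_eq_empty_iff.mp h)
  rw [flatC, List.getD_filter_ne_zero_of_pairwise hL, List.getD_eq_getElem _ _ (by simp),
    List.getElem_ofFn]

lemma zeroInversions_flatC (α : Fin n → ℕ) : zeroInversions (flatC n α) = ∅ := by
  have hF : ∀ x ∈ (List.ofFn α).filter (· ≠ 0), x ≠ 0 := fun x hx => by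
    simpa using List.of_mem_filter hx
  refine zeroInversions_eq_empty_iff.mpr fun p q hpq hp => ?_
  rw [flatC, List.getD_eq_zero_iff_length_le hF] at hp ⊢
  exact hp.trans (Fin.le_def.mp hpq.le)

lemma ofFn_swapAt {j : ℕ} (hj : j + 1 < n) {α : Fin n → ℕ} (h₀ : α ⟨j, by omega⟩ = 0) :
    List.ofFn (swapAt n j α)
      = ((List.ofFn α).set j ((List.ofFn α).getD (j + 1) 0)).set (j + 1) 0 := by
  have h₁ : (List.ofFn α).getD (j + 1) 0 = α ⟨j + 1, hj⟩ := by
    rw [List.getD_eq_getElem _ _ (by simpa using hj), List.getElem_ofFn]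
  refine List.ext_getElem (by simp) fun k hk _ => ?_
  simp only [h₁, List.getElem_ofFn, List.getElem_set, swapAt_eq_comp_swap j hj,
    Function.comp_apply, Equiv.swap_apply_def]
  split_ifs <;> simp_all [Fin.ext_iff]

lemma flatC_swapAt {j : ℕ} (hj : j + 1 < n) {α : Fin n → ℕ} (h₀ : α ⟨j, by omega⟩ = 0) :
    flatC n (swapAt n j α) = flatC n α := by
  have h : (List.ofFn α).getD j 0 = 0 := by
    rwa [List.getD_eq_getElem _ _ (by simp; omega), List.getElem_ofFn]
  funext p
  rw [flatC, flatC, ofFn_swapAt hj h₀, List.filter_ne_zero_set_set h]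

lemma card_zeroInversions_le_length {w : List ℕ} {α β : Fin n → ℕ}
    (hw : w.foldr (swapAt n) α = flatC n β) : #(zeroInversions α) ≤ w.length := by
  simpa [hw, zeroInversions_flatC] using card_zeroInversions_le_foldr_swapAt w α

lemma exists_word_length_eq_card_zeroInversions (α : Fin n → ℕ) :
    ∃ w : List ℕ, (∀ j ∈ w, j + 1 < n) ∧ w.foldr (swapAt n) α = flatC n α ∧
      w.length = #(zeroInversions α) := by
  induction h : #(zeroInversions α) generalizing α with
  | zero => exact ⟨[], by simp, (flatC_eq_self (card_eq_zero.mp h)).symm, rfl⟩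
  | succ N ih =>
    obtain ⟨j, hα⟩ := exists_isZeroAscent (α := α) (card_pos.mp (by omega))
    obtain ⟨w, hw, hfold, hlen⟩ := ih (swapAt n j α)
      (by have := card_zeroInversions_of_isZeroAscent hα; omega)
    refine ⟨w ++ [j], ?_, ?_, by simp [hlen]⟩
    · exact List.forall_mem_append.mpr ⟨hw, List.forall_mem_singleton.mpr hα.1⟩
    · simp [hfold, flatC_swapAt hα.1 hα.2.1]

lemma isMinWord_iff {l : List ℕ} {α : Fin n → ℕ} :
    IsMinWord n l α ↔ (∀ j ∈ l, j + 1 < n) ∧ l.foldr (swapAt n) α = flatC n α ∧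
      l.length = #(zeroInversions α) := by
  obtain ⟨w, hw, hwα, hlen⟩ := exists_word_length_eq_card_zeroInversions α
  constructor
  · rintro ⟨hl, hlα, hmin⟩
    exact ⟨hl, hlα, le_antisymm (hlen ▸ hmin w hw hwα) (card_zeroInversions_le_length hlα)⟩
  · rintro ⟨hl, hlα, hllen⟩
    exact ⟨hl, hlα, fun w' _ hw' => hllen ▸ card_zeroInversions_le_length hw'⟩

lemma isMinWord_append_singleton_iff {m : List ℕ} {j : ℕ} {α : Fin n → ℕ} :
    IsMinWord n (m ++ [j]) α ↔ IsZeroAscent α j ∧ IsMinWord n m (swapAt n j α) := by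
  simp only [isMinWord_iff, List.forall_mem_append, List.forall_mem_singleton, List.foldr_append,
    List.foldr_cons, List.foldr_nil, List.length_append, List.length_singleton]
  constructor
  · rintro ⟨⟨hm, hj⟩, hfold, hlen⟩
    have hα : IsZeroAscent α j := isZeroAscent_of_card_zeroInversions_lt
      (by have := card_zeroInversions_le_length hfold; omega)
    have := card_zeroInversions_of_isZeroAscent hα
    exact ⟨hα, hm, by rw [hfold, flatC_swapAt hj hα.2.1], by omega⟩
  · rintro ⟨hα, hm, hfold, hlen⟩
    have := card_zeroInversions_of_isZeroAscent hα
    exact ⟨⟨hm, hα.1⟩, by rw [hfold, flatC_swapAt hα.1 hα.2.1], by omega⟩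

lemma swapAt_apply_of_ne (j : ℕ) (α : Fin n → ℕ) {p : Fin n} (h₀ : (p : ℕ) ≠ j)
    (h₁ : (p : ℕ) ≠ j + 1) : swapAt n j α p = α p := by
  unfold swapAt
  split_ifs
  · exact congrArg α
      (Equiv.swap_apply_of_ne_of_ne (by simpa [Fin.ext_iff]) (by simpa [Fin.ext_iff]))
  · rfl

lemma swapAt_comm {i j : ℕ} (hi : i + 1 < n) (hj : j + 1 < n) (hij : i + 1 < j ∨ j + 1 < i)
    (α : Fin n → ℕ) : swapAt n i (swapAt n j α) = swapAt n j (swapAt n i α) := by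
  have hdisj := Equiv.Perm.disjoint_swap_swap (x := (⟨i, by omega⟩ : Fin n)) (y := ⟨i + 1, hi⟩)
    (z := ⟨j, by omega⟩) (t := ⟨j + 1, hj⟩) (by simp [Fin.ext_iff]; omega)
  funext p
  simp only [swapAt_eq_comp_swap _ hi, swapAt_eq_comp_swap _ hj, Function.comp_apply]
  exact congrArg α (DFunLike.congr_fun hdisj.commute.eq.symm p)

lemma IsZeroAscent.far {α : Fin n → ℕ} {i j : ℕ} (hi : IsZeroAscent α i) (hj : IsZeroAscent α j)
    (hij : i ≠ j) : i + 1 < j ∨ j + 1 < i := by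
  obtain ⟨hi, hi₀, hi₁⟩ := hi
  obtain ⟨hj, hj₀, hj₁⟩ := hj
  by_contra hnear
  rcases (by omega : j = i + 1 ∨ i = j + 1) with rfl | rfl
  · exact hi₁ hj₀
  · exact hj₁ hi₀

lemma IsZeroAscent.swapAt_of_far {α : Fin n → ℕ} {i j : ℕ} (hi : IsZeroAscent α i)
    (hij : i + 1 < j ∨ j + 1 < i) : IsZeroAscent (swapAt n j α) i := by
  obtain ⟨hi, hi₀, hi₁⟩ := hi
  exact ⟨hi, by rwa [swapAt_apply_of_ne] <;> simp only <;> omega,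
    by rwa [swapAt_apply_of_ne] <;> simp only <;> omega⟩

lemma thetaWordInv_append_singleton (m : List ℕ) (j : ℕ) (f : MvPolynomial (Fin n) ℂ) :
    thetaWordInv n (m ++ [j]) f = thetatilde n j (thetaWordInv n m f) := by
  simp [thetaWordInv]

theorem thetaWordInv_eq_of_isMinWord {α : Fin n → ℕ} {l₁ l₂ : List ℕ} (h₁ : IsMinWord n l₁ α)
    (h₂ : IsMinWord n l₂ α) : thetaWordInv n l₁ = thetaWordInv n l₂ := by
  induction hN : #(zeroInversions α) generalizing α l₁ l₂ with
  | zero =>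
    rw [List.eq_nil_of_length_eq_zero ((isMinWord_iff.mp h₁).2.2.trans hN),
      List.eq_nil_of_length_eq_zero ((isMinWord_iff.mp h₂).2.2.trans hN)]
  | succ N ih =>
    have hne_nil : ∀ {l : List ℕ}, IsMinWord n l α → l ≠ [] := fun h hnil => by
      simpa [hnil, hN] using (isMinWord_iff.mp h).2.2
    obtain ⟨m₁, j₁, rfl⟩ := (List.eq_nil_or_concat' l₁).resolve_left (hne_nil h₁)
    obtain ⟨m₂, j₂, rfl⟩ := (List.eq_nil_or_concat' l₂).resolve_left (hne_nil h₂)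
    obtain ⟨hα₁, hm₁⟩ := isMinWord_append_singleton_iff.mp h₁
    obtain ⟨hα₂, hm₂⟩ := isMinWord_append_singleton_iff.mp h₂
    have hN₁ := card_zeroInversions_of_isZeroAscent hα₁
    have hN₂ := card_zeroInversions_of_isZeroAscent hα₂
    funext f
    rw [thetaWordInv_append_singleton, thetaWordInv_append_singleton]
    rcases eq_or_ne j₁ j₂ with rfl | hne
    · rw [ih hm₁ hm₂ (by omega)]
    have hfar := hα₁.far hα₂ hne
    obtain ⟨u, hu⟩ : ∃ u, IsMinWord n u (swapAt n j₂ (swapAt n j₁ α)) :=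
      (exists_word_length_eq_card_zeroInversions _).imp fun _ => isMinWord_iff.mpr
    have hu₁ : IsMinWord n (u ++ [j₂]) (swapAt n j₁ α) :=
      isMinWord_append_singleton_iff.mpr ⟨hα₂.swapAt_of_far hfar.symm, hu⟩
    have hu₂ : IsMinWord n (u ++ [j₁]) (swapAt n j₂ α) :=
      isMinWord_append_singleton_iff.mpr
        ⟨hα₁.swapAt_of_far hfar, by rwa [swapAt_comm hα₁.1 hα₂.1 hfar]⟩
    rw [ih hm₁ hu₁ (by omega), ih hm₂ hu₂ (by omega), thetaWordInv_append_singleton,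
      thetaWordInv_append_singleton, thetatilde_comm j₁ j₂ hα₁.1 hα₂.1 hfar]

end FundamentalAtom

open FundamentalAtom

/-- Lemma 3 of the paper: the fundamental Demazure atom
`Ã_α = θ̃_{w_α⁻¹}(x^{flat(α)})` satisfies the recursion
`Ã_α = θ̃ᵢ(Ã_{sᵢ(α)})` whenever `αᵢ = 0` and `αᵢ₊₁ ≠ 0`.  Here the atom for a
weak composition `β` is computed as `thetaWordInv n l (x^{flat β})` for any
minimal-length word `l` with `s_{l₁} ⋯ s_{l_k}(β) = flat(β)`. -/
theorem fundamental_atom_recursion (n i : ℕ) (hi : i + 1 < n) (α : Fin n → ℕ)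
    (h0 : α ⟨i, by omega⟩ = 0) (h1 : α ⟨i + 1, hi⟩ ≠ 0)
    (l l' : List ℕ) (hl : IsMinWord n l α) (hl' : IsMinWord n l' (swapAt n i α)) :
    thetaWordInv n l (monomial (toExp n (flatC n α)) (1 : ℂ))
      = thetatilde n i
          (thetaWordInv n l' (monomial (toExp n (flatC n (swapAt n i α))) (1 : ℂ))) := by
  have hl'' : IsMinWord n (l' ++ [i]) α := isMinWord_append_singleton_iff.mpr ⟨⟨hi, h0, h1⟩, hl'⟩
  rw [flatC_swapAt hi h0, ← thetaWordInv_append_singleton, thetaWordInv_eq_of_isMinWord hl hl'']
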